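/- Fix N ≥ 1, M ≥ 1 and ε = (ε₀,…,ε_{N−1}) ∈ {0,1}^N. Let q_i^{(t)}, q_i^{(t+M)} (0 ≤ i ≤ N−1) and e_i^{(t)}, e_i^{(t+1)} (0 ≤ i ≤ N−2) be elements of a field, with the conventions e_{−1}^{(t)} = e_{−1}^{(t+1)} = e_{N−1}^{(t)} = 0. Build R^{(t)} = R(q^{(t)}), R^{(t+M)} = R(q^{(t+M)}), and L₁^{(t)}, L₂^{(t)} from (ε, e^{(t)}) and L₁^{(t+1)}, L₂^{(t+1)} from (ε, e^{(t+1)}) as in the context. Then the matrix equation L₁^{(t+1)} L₂^{(t+1)} R^{(t+M)} = R^{(t)} L₁^{(t)} L₂^{(t)} holds if and only if q_i^{(t+M)} = q_i^{(t)} + e_i^{(t)} − e_{i−1}^{(t+1)} for all 0 ≤ i ≤ N−1 and e_i^{(t+1)} (q_i^{(t+M)} + ε_i e_{i−1}^{(t+1)}) = e_i^{(t)} (q_{i+1}^{(t)} + ε_{i+1} e_{i+1}^{(t)}) for all 0 ≤ i ≤ N−2. -/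

import Mathlib

/-!
Write `K = L₁ L₂`. From `(I - Σ ε_b e_b E_{b+1,b}) K = L₂`, `K` is unipotent lower triangular
with subdiagonal `e`, and `K_{a+1,c} = ε_a e_a K_{a,c}` strictly below the subdiagonal (`c < a`).
On the diagonal and the subdiagonal, the entries of `K' R(q') = R(q) K` are exactly the two scalar
equations. Strictly below the subdiagonal, both sides obey a first-order recursion down each
column, with factors `ε_a e'_a (q_a + ε_a e_a)` and `ε_a e_a (q_{a+1} + ε_{a+1} e_{a+1})`; since
`ε_a² = ε_a`, the two scalar equations make these factors agree.
-/

/-- `R(q)`: upper bidiagonal matrix with diagonal `q₀,…,q_{N-1}` and superdiagonal `1`. -/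
def Rm {F : Type*} [Field F] (N : ℕ) (q : ℕ → F) : Matrix (Fin N) (Fin N) F :=
  Matrix.of fun a b => if (a : ℕ) = (b : ℕ) then q a
    else if (b : ℕ) = (a : ℕ) + 1 then 1 else 0

/-- `L₁`: the inverse of `I - Σ_{a=1}^{N-1} ε_{a-1} e_{a-1} E_{a+1,a}`. -/
noncomputable def L1m {F : Type*} [Field F] (N : ℕ) (ε : ℕ → F) (e : ℕ → F) :
    Matrix (Fin N) (Fin N) F :=
  (1 - Matrix.of fun a b : Fin N =>
    if (a : ℕ) = (b : ℕ) + 1 then ε b * e b else 0)⁻¹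

/-- `L₂ = I + Σ_{a=1}^{N-1} (1-ε_{a-1}) e_{a-1} E_{a+1,a}`. -/
def L2m {F : Type*} [Field F] (N : ℕ) (ε : ℕ → F) (e : ℕ → F) :
    Matrix (Fin N) (Fin N) F :=
  1 + Matrix.of fun a b : Fin N =>
    if (a : ℕ) = (b : ℕ) + 1 then (1 - ε b) * e b else 0

section Sums

variable {M : Type*} [AddCommMonoid M]

lemma sum_fin_ite_val_eq (N n : ℕ) (g : ℕ → M) :
    (∑ b : Fin N, if (b : ℕ) = n then g b else 0) = if n < N then g n else 0 := by
  rw [Fin.sum_univ_eq_sum_range (fun b => if b = n then g b else 0), Finset.sum_ite_eq']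
  simp only [Finset.mem_range]

lemma sum_fin_ite_eq_val_succ (N n : ℕ) (g : ℕ → M) (hn : n ≤ N) :
    (∑ b : Fin N, if n = (b : ℕ) + 1 then g b else 0) = if 1 ≤ n then g (n - 1) else 0 := by
  rw [Fin.sum_univ_eq_sum_range (fun b => if n = b + 1 then g b else 0)]
  rcases n with _ | n
  · simp
  · simp only [Nat.add_right_cancel_iff, Finset.sum_ite_eq, Finset.mem_range]
    simp only [le_add_iff_nonneg_left, zero_le, ↓reduceIte, add_tsub_cancel_right,
      ite_eq_left_iff, not_lt]
    omega

end Sums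

section CommRing

variable {R : Type*} [CommRing R]

/-- The entries of `L1m N ε e * L2m N ε e`, computed row by row from
`(1 - Σ ε_b e_b E_{b+1,b}) (L₁ L₂) = L₂`. -/
def L12 (ε e : ℕ → R) : ℕ → ℕ → R
  | 0, c => if c = 0 then 1 else 0
  | a + 1, c => ε a * e a * L12 ε e a c + (if c = a + 1 then 1 else 0) +
      if c = a then (1 - ε a) * e a else 0

section L12

variable (ε e : ℕ → R)

lemma L12_of_lt {a c : ℕ} (h : a < c) : L12 ε e a c = 0 := by
  induction a with
  | zero => simp [L12, h.ne']
  | succ a ih => rw [L12, ih (by omega), if_neg (by omega), if_neg (by omega)]; ring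

@[simp]
lemma L12_self (a : ℕ) : L12 ε e a a = 1 := by
  cases a with
  | zero => simp [L12]
  | succ a => simp [L12, L12_of_lt ε e (Nat.lt_succ_self a)]

@[simp]
lemma L12_succ_self (a : ℕ) : L12 ε e (a + 1) a = e a := by
  simp only [L12, L12_self, mul_one, Nat.left_eq_add, one_ne_zero, ↓reduceIte, add_zero]
  ring

lemma L12_succ_of_lt {a c : ℕ} (h : c < a) : L12 ε e (a + 1) c = ε a * e a * L12 ε e a c := by
  rw [L12, if_neg (by omega), if_neg (by omega)]; ring

lemma L12_succ_eq_zero {n c : ℕ} (he : e n = 0) (hc : c ≤ n) : L12 ε e (n + 1) c = 0 := by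
  rcases hc.lt_or_eq with hc | rfl
  · simp [L12_succ_of_lt ε e hc, he]
  · simp [he]

lemma L12_sub_eq (a c : ℕ) :
    L12 ε e a c - (if 1 ≤ a then ε (a - 1) * e (a - 1) * L12 ε e (a - 1) c else 0) =
      (if a = c then 1 else 0) + if a = c + 1 then (1 - ε c) * e c else 0 := by
  cases a with
  | zero => simp [L12, eq_comm]
  | succ a =>
    simp only [L12, le_add_iff_nonneg_left, zero_le, if_true, Nat.add_sub_cancel]
    simp only [eq_comm, Nat.add_right_cancel_iff]
    split_ifs <;> first | omega | (subst_vars; ring)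

end L12

/-- `mulR K q a c` and `RMul q K a c` are the `(a, c)` entries of `K R(q)` and `R(q) K` for an
`ℕ × ℕ`-indexed matrix `K`. -/
def mulR (K : ℕ → ℕ → R) (q : ℕ → R) (a c : ℕ) : R :=
  K a c * q c + if 1 ≤ c then K a (c - 1) else 0

def RMul (q : ℕ → R) (K : ℕ → ℕ → R) (a c : ℕ) : R :=
  q a * K a c + K (a + 1) c

section Entries

variable (ε e q : ℕ → R)

lemma mulR_L12_self (a : ℕ) :
    mulR (L12 ε e) q a a = q a + if 1 ≤ a then e (a - 1) else 0 := by
  rw [mulR, L12_self, one_mul]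
  split_ifs with h
  · obtain ⟨b, rfl⟩ := Nat.exists_eq_add_of_le' h
    simp
  · rfl

lemma RMul_L12_self (a : ℕ) : RMul q (L12 ε e) a a = q a + e a := by
  simp [RMul]

lemma mulR_L12_succ_self (c : ℕ) :
    mulR (L12 ε e) q (c + 1) c = e c * (q c + ε c * if 1 ≤ c then e (c - 1) else 0) := by
  rw [mulR, L12_succ_self]
  split_ifs with h
  · obtain ⟨b, rfl⟩ := Nat.exists_eq_add_of_le' h
    rw [L12_succ_of_lt ε e (by omega)]
    simp only [add_tsub_cancel_right, L12_succ_self]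
    ring
  · ring

lemma RMul_L12_succ_self (c : ℕ) :
    RMul q (L12 ε e) (c + 1) c = e c * (q (c + 1) + ε (c + 1) * e (c + 1)) := by
  rw [RMul, L12_succ_self, L12_succ_of_lt ε e (Nat.lt_succ_self c), L12_succ_self]
  ring

lemma mulR_L12_succ_of_lt {a c : ℕ} (h : c < a) :
    mulR (L12 ε e) q (a + 1) c = ε a * e a * mulR (L12 ε e) q a c := by
  simp only [mulR, L12_succ_of_lt ε e h, L12_succ_of_lt ε e (lt_of_le_of_lt (Nat.sub_le c 1) h)]
  split_ifs <;> ring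

lemma RMul_L12_of_lt {a c : ℕ} (h : c < a) :
    RMul q (L12 ε e) a c = (q a + ε a * e a) * L12 ε e a c := by
  rw [RMul, L12_succ_of_lt ε e h]
  ring

lemma mulR_L12_eq_RMul_L12_of_lt (e' q' : ℕ → R) {a c : ℕ} (h : a < c) :
    mulR (L12 ε e') q' a c = RMul q (L12 ε e) a c := by
  rw [mulR, RMul, L12_of_lt ε e' h, L12_of_lt ε e h]
  rcases Nat.lt_or_eq_of_le (Nat.succ_le_of_lt h) with h | rfl
  · rw [L12_of_lt ε e h, if_pos (by omega), L12_of_lt ε e' (by omega)]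
    ring
  · simp

end Entries

lemma ite_one_le_sub_one_eq {e : ℤ → R} (he : e (-1) = 0) (c : ℕ) :
    (if 1 ≤ c then e ((c - 1 : ℕ) : ℤ) else 0) = e ((c : ℤ) - 1) := by
  split_ifs with h
  · rw [Nat.cast_sub h, Nat.cast_one]
  · rw [(by omega : c = 0), Nat.cast_zero, zero_sub, he]

lemma mulR_L12_eq_RMul_L12_of_gt (ε e e' q q' : ℕ → R) {N c : ℕ}
    (hstep : ∀ a, c < a → a + 1 < N →
      ε a * e' a * (q a + ε a * e a) = ε a * e a * (q (a + 1) + ε (a + 1) * e (a + 1)))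
    (hsub : mulR (L12 ε e') q' (c + 1) c = RMul q (L12 ε e) (c + 1) c)
    {a : ℕ} (h : c < a) (ha : a < N) :
    mulR (L12 ε e') q' a c = RMul q (L12 ε e) a c := by
  induction a, h using Nat.le_induction with
  | base => exact hsub
  | succ a hca ih =>
    rw [mulR_L12_succ_of_lt _ _ _ hca, ih (by omega), RMul_L12_of_lt _ _ _ hca,
      RMul_L12_of_lt _ _ _ (by omega), L12_succ_of_lt _ _ hca]
    linear_combination L12 ε e a c * hstep a hca ha

lemma forall_mulR_L12_eq_RMul_L12_iff (ε : ℕ → R) (hε : ∀ i, ε i = 0 ∨ ε i = 1)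
    (q q' : ℕ → R) (e e' : ℤ → R) (he' : e' (-1) = 0) (N : ℕ) :
    (∀ a < N, ∀ c < N,
        mulR (L12 ε fun b : ℕ => e' b) q' a c = RMul q (L12 ε fun b : ℕ => e b) a c) ↔
      ((∀ i : ℕ, i < N → q' i = q i + e i - e' (i - 1)) ∧
       (∀ i : ℕ, i + 1 < N →
          e' i * (q' i + ε i * e' (i - 1)) = e i * (q (i + 1) + ε (i + 1) * e (i + 1)))) := by
  have hdiag (i : ℕ) : mulR (L12 ε fun b : ℕ => e' b) q' i i = RMul q (L12 ε fun b : ℕ => e b) i i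
      ↔ q' i = q i + e i - e' (i - 1) := by
    rw [mulR_L12_self, RMul_L12_self, ite_one_le_sub_one_eq he']
    constructor <;> intro h <;> linear_combination h
  have hsub (i : ℕ) :
      mulR (L12 ε fun b : ℕ => e' b) q' (i + 1) i = RMul q (L12 ε fun b : ℕ => e b) (i + 1) i
      ↔ e' i * (q' i + ε i * e' (i - 1)) = e i * (q (i + 1) + ε (i + 1) * e (i + 1)) := by
    rw [mulR_L12_succ_self, RMul_L12_succ_self, ite_one_le_sub_one_eq he']
    push_cast
    rfl
  constructor
  · intro H
    exact ⟨fun i hi => (hdiag i).1 (H i hi i hi),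
      fun i hi => (hsub i).1 (H (i + 1) hi i (by omega))⟩
  · rintro ⟨hq, hsubdiag⟩ a ha c hc
    rcases lt_trichotomy a c with h | rfl | h
    · exact mulR_L12_eq_RMul_L12_of_lt _ _ _ _ _ h
    · exact (hdiag a).2 (hq a ha)
    · refine mulR_L12_eq_RMul_L12_of_gt _ _ _ _ _ (fun b _ hb => ?_) ((hsub c).2 (hsubdiag c (by omega)))
        h ha
      rcases hε b with h0 | h1
      · simp [h0]
      · have hsubdiag_b := hsubdiag b hb
        rw [h1] at hsubdiag_b ⊢
        push_cast
        linear_combination hsubdiag_b - e' b * hq b (by omega)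

end CommRing

section Field

variable {F : Type*} [Field F]

lemma L1m_mul_L2m (N : ℕ) (ε e : ℕ → F) :
    L1m N ε e * L2m N ε e = Matrix.of fun a c : Fin N => L12 ε e a c := by
  set S : Matrix (Fin N) (Fin N) F :=
    Matrix.of fun a b => if (a : ℕ) = (b : ℕ) + 1 then ε b * e b else 0
  have hdet : IsUnit (1 - S).det := by
    rw [Matrix.det_of_isLowerTriangular]
    · simp [S]
    · intro i j (hij : i < j)
      have hij' : (i : ℕ) < j := hij
      simp only [S, Matrix.sub_apply, Matrix.one_apply_ne hij.ne, Matrix.of_apply, zero_sub,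
        neg_eq_zero, ite_eq_right_iff, mul_eq_zero]
      omega
  have hfactor : (1 - S) * Matrix.of (fun a c : Fin N => L12 ε e a c) = L2m N ε e := by
    ext a c
    rw [sub_mul, one_mul, Matrix.sub_apply, Matrix.mul_apply]
    simp only [S, Matrix.of_apply, ite_mul, zero_mul]
    rw [sum_fin_ite_eq_val_succ N a (fun b => ε b * e b * L12 ε e b c) a.isLt.le, L12_sub_eq]
    simp [L2m, Matrix.one_apply, Fin.val_inj]
  rw [L1m, ← hfactor, Matrix.nonsing_inv_mul_cancel_left _ _ hdet]

lemma of_mul_Rm_apply {N : ℕ} (K : ℕ → ℕ → F) (q : ℕ → F) (a c : Fin N) :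
    (Matrix.of (fun a c : Fin N => K a c) * Rm N q) a c = mulR K q a c := by
  have hsummand (b : Fin N) : K a b * Rm N q b c =
      (if (b : ℕ) = c then K a b * q b else 0) + if (c : ℕ) = b + 1 then K a b else 0 := by
    simp only [Rm, Matrix.of_apply]
    split_ifs <;> first | omega | ring
  rw [Matrix.mul_apply]
  simp only [Matrix.of_apply, hsummand, Finset.sum_add_distrib]
  rw [sum_fin_ite_val_eq N c (fun b => K a b * q b),
    sum_fin_ite_eq_val_succ N c (K a) c.isLt.le, if_pos c.isLt, mulR]

lemma Rm_mul_of_apply {N : ℕ} (K : ℕ → ℕ → F) (q : ℕ → F) (hK : ∀ c < N, K N c = 0)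
    (a c : Fin N) : (Rm N q * Matrix.of (fun a c : Fin N => K a c)) a c = RMul q K a c := by
  have hsummand (b : Fin N) : Rm N q a b * K b c =
      (if (b : ℕ) = a then q a * K b c else 0) + if (b : ℕ) = a + 1 then K b c else 0 := by
    simp only [Rm, Matrix.of_apply]
    split_ifs <;> first | omega | ring
  rw [Matrix.mul_apply]
  simp only [Matrix.of_apply, hsummand, Finset.sum_add_distrib]
  rw [sum_fin_ite_val_eq N a (fun b => q a * K b c), sum_fin_ite_val_eq N (a + 1) (K · c),
    if_pos a.isLt, RMul]
  split_ifs with h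
  · rfl
  · rw [(by omega : (a : ℕ) + 1 = N), hK c c.isLt]

end Field

/-- The parameters `e^{(t)}, e^{(t+1)}` are indexed by `ℤ` so that the conventions
`e_{-1}^{(t)} = e_{-1}^{(t+1)} = e_{N-1}^{(t)} = 0` can be imposed. -/
theorem stmt_6 {F : Type*} [Field F] (N : ℕ)
    (ε : ℕ → F) (hε : ∀ i, ε i = 0 ∨ ε i = 1)
    (qt qM : ℕ → F) (et et1 : ℤ → F)
    (h2 : et1 (-1) = 0) (h3 : et ((N : ℤ) - 1) = 0) :
    L1m N ε (fun b => et1 (b : ℤ)) * L2m N ε (fun b => et1 (b : ℤ)) * Rm N qM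
        = Rm N qt * (L1m N ε (fun b => et (b : ℤ)) * L2m N ε (fun b => et (b : ℤ))) ↔
      ((∀ i : ℕ, i < N → qM i = qt i + et (i : ℤ) - et1 ((i : ℤ) - 1)) ∧
       (∀ i : ℕ, i + 1 < N →
          et1 (i : ℤ) * (qM i + ε i * et1 ((i : ℤ) - 1))
            = et (i : ℤ) * (qt (i + 1) + ε (i + 1) * et ((i : ℤ) + 1)))) := by
  have hlast : ∀ c < N, L12 ε (fun b : ℕ => et b) N c = 0 := by
    intro c hc
    obtain ⟨n, rfl⟩ : ∃ n, N = n + 1 := ⟨N - 1, by omega⟩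
    exact L12_succ_eq_zero _ _ (by simpa using h3) (by omega)
  rw [L1m_mul_L2m, L1m_mul_L2m, ← Matrix.ext_iff]
  simp only [of_mul_Rm_apply, Rm_mul_of_apply _ _ hlast, Fin.forall_iff]
  exact forall_mulR_L12_eq_RMul_L12_iff ε hε qt qM et et1 h2 N
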